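/- arXiv:2202.05606 — 5 statements merged into one kernel-verified Lean document; each statement's English description precedes it below -/
import Mathlib

section
/- Let $C_*$ and $D_*$ be normed chain complexes over a normed ring $R$, let $f_* \colon C_* \to D_*$ and $g_* \colon D_* \to C_*$ be chain maps that are bounded in each degree, and let $h_* \colon D_* \to D_{*+1}$ be a degree-wise bounded chain homotopy between $f_* \circ g_*$ and $\mathrm{id}_{D_*}$. If $K > 0$ is a $\mathrm{UBC}_k$-constant for $C_*$, then $\|f_{k+1}\| \cdot \|g_k\| \cdot K + \|h_k\|$ is a $\mathrm{UBC}_k$-constant for $D_*$. -/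
/-- `K` is a `UBC_k`-constant for the (co)boundary operator `d` (thought of as
`∂_{k+1} : C_{k+1} → C_k`): every element of the image of `d` admits a preimage whose norm is
controlled by `K` times the norm of the element. -/
def IsUBCConstant {A B : Type*} [SeminormedAddCommGroup A] [SeminormedAddCommGroup B]
    (K : ℝ) (d : NormedAddGroupHom A B) : Prop :=
  ∀ b ∈ Set.range d, ∃ a, d a = b ∧ ‖a‖ ≤ K * ‖b‖

/-- **Quantitative homotopy inheritance of the uniform boundary condition.**
Let `C_*`, `D_*` be normed chain complexes over a normed ring `R` (chain complexes of normed
`R`-modules with degree-wise bounded boundary operators), `f : C → D`, `g : D → C` degree-wise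
bounded chain maps, and `h` a degree-wise bounded chain homotopy between `f ∘ g` and `id_D`.
If `K > 0` is a `UBC_k`-constant for `C_*`, then `‖f (k+1)‖ * ‖g k‖ * K + ‖h k‖` is a
`UBC_k`-constant for `D_*`. -/
theorem stmt0 {R : Type*} [NormedRing R] (C D : ℕ → Type*)
    [∀ n, SeminormedAddCommGroup (C n)] [∀ n, SeminormedAddCommGroup (D n)]
    [∀ n, Module R (C n)] [∀ n, Module R (D n)]
    (dC : ∀ n, NormedAddGroupHom (C (n + 1)) (C n))
    (dD : ∀ n, NormedAddGroupHom (D (n + 1)) (D n))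
    (hdC : ∀ n x, dC n (dC (n + 1) x) = 0) (hdD : ∀ n x, dD n (dD (n + 1) x) = 0)
    (hdClin : ∀ n (r : R) x, dC n (r • x) = r • dC n x)
    (hdDlin : ∀ n (r : R) x, dD n (r • x) = r • dD n x)
    (f : ∀ n, NormedAddGroupHom (C n) (D n)) (g : ∀ n, NormedAddGroupHom (D n) (C n))
    (hflin : ∀ n (r : R) x, f n (r • x) = r • f n x)
    (hglin : ∀ n (r : R) x, g n (r • x) = r • g n x)
    (hf : ∀ n x, f n (dC n x) = dD n (f (n + 1) x))
    (hg : ∀ n x, g n (dD n x) = dC n (g (n + 1) x))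
    (h : ∀ n, NormedAddGroupHom (D n) (D (n + 1)))
    (hh : ∀ n (x : D (n + 1)),
      f (n + 1) (g (n + 1) x) - x = dD (n + 1) (h (n + 1) x) + h n (dD n x))
    (hh0 : ∀ x : D 0, f 0 (g 0 x) - x = dD 0 (h 0 x))
    (k : ℕ) (K : ℝ) (hK : 0 < K) (hKubc : IsUBCConstant K (dC k)) :
    IsUBCConstant (‖f (k + 1)‖ * ‖g k‖ * K + ‖h k‖) (dD k) := by
  intro b hb
  obtain ⟨x, hx⟩ := hb
  have hgb : g k b ∈ Set.range (dC k) := ⟨g (k+1) x, by rw [← hg, hx]⟩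
  obtain ⟨a, ha, hna⟩ := hKubc _ hgb
  refine ⟨f (k+1) a - h k b, ?_, ?_⟩
  · have key : f k (g k b) - b = dD k (h k b) := by
      cases k with
      | zero => exact hh0 b
      | succ n =>
        have hb0 : dD n b = 0 := by rw [← hx]; exact hdD n x
        have := hh n b
        rwa [hb0, map_zero, add_zero] at this
    have : dD k (f (k+1) a) = f k (g k b) := by rw [← hf, ha]
    rw [map_sub, this, ← key]
    abel
  · calc ‖f (k+1) a - h k b‖ ≤ ‖f (k+1) a‖ + ‖h k b‖ := norm_sub_le _ _
      _ ≤ ‖f (k+1)‖ * ‖a‖ + ‖h k‖ * ‖b‖ := by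
          gcongr <;> [exact (f (k+1)).le_opNorm a; exact (h k).le_opNorm b]
      _ ≤ ‖f (k+1)‖ * (K * (‖g k‖ * ‖b‖)) + ‖h k‖ * ‖b‖ := by
          have h1 : ‖a‖ ≤ K * (‖g k‖ * ‖b‖) := hna.trans (by
            have := (g k).le_opNorm b
            nlinarith)
          have := (f (k+1)).opNorm_nonneg
          nlinarith
      _ = (‖f (k + 1)‖ * ‖g k‖ * K + ‖h k‖) * ‖b‖ := by ring
end

section
/- Let $C_*$ and $D_*$ be normed chain complexes over a normed ring $R$ that are chain homotopy equivalent via degree-wise bounded chain maps and degree-wise bounded chain homotopies. Then $C_*$ satisfies the uniform boundary condition in degree $k$ if and only if $D_*$ satisfies the uniform boundary condition in degree $k$. -/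
lemma ubc_transfer {A1 A0 B1 B0 : Type*} [SeminormedAddCommGroup A1]
    [SeminormedAddCommGroup A0] [SeminormedAddCommGroup B1] [SeminormedAddCommGroup B0]
    (dC : NormedAddGroupHom A1 A0) (dD : NormedAddGroupHom B1 B0)
    (f1 : NormedAddGroupHom A1 B1) (f0 : NormedAddGroupHom A0 B0)
    (g0 : NormedAddGroupHom B0 A0) (g1 : NormedAddGroupHom B1 A1)
    (h : NormedAddGroupHom B0 B1)
    (hfcomm : ∀ x, f0 (dC x) = dD (f1 x))
    (hgcomm : ∀ y, g0 (dD y) = dC (g1 y))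
    (hhom : ∀ b ∈ Set.range dD, f0 (g0 b) = b + dD (h b))
    (K : ℝ) (hK : IsUBCConstant K dC) :
    ∃ K' > 0, IsUBCConstant K' dD := by
  have hK' : IsUBCConstant (max K 0) dC := fun b hb => by
    obtain ⟨a, ha, hn⟩ := hK b hb
    exact ⟨a, ha, hn.trans (mul_le_mul_of_nonneg_right (le_max_left _ _) (norm_nonneg _))⟩
  set K₀ := max K 0 with hK₀
  have hK0 : (0:ℝ) ≤ K₀ := le_max_right _ _
  refine ⟨‖f1‖ * K₀ * ‖g0‖ + ‖h‖ + 1, by positivity, ?_⟩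
  intro b hb
  obtain ⟨y, hy⟩ := hb
  have hmem : g0 b ∈ Set.range dC := ⟨g1 y, by rw [← hgcomm, hy]⟩
  obtain ⟨c, hc, hcn⟩ := hK' (g0 b) hmem
  refine ⟨f1 c - h b, ?_, ?_⟩
  · have : dD (f1 c) = b + dD (h b) := by
      rw [← hfcomm, hc, hhom b ⟨y, hy⟩]
    simp [map_sub, this]
  · have h1 : ‖f1 c‖ ≤ ‖f1‖ * ‖c‖ := f1.le_opNorm c
    have h3 : ‖g0 b‖ ≤ ‖g0‖ * ‖b‖ := g0.le_opNorm b
    have h4 : ‖h b‖ ≤ ‖h‖ * ‖b‖ := h.le_opNorm b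
    have h5 : ‖f1 c - h b‖ ≤ ‖f1 c‖ + ‖h b‖ := norm_sub_le _ _
    have hb0 : (0:ℝ) ≤ ‖b‖ := norm_nonneg _
    have hf0 : (0:ℝ) ≤ ‖f1‖ := norm_nonneg _
    have h6 : ‖f1‖ * ‖c‖ ≤ ‖f1‖ * (K₀ * ‖g0 b‖) := mul_le_mul_of_nonneg_left hcn hf0
    have h7 : ‖f1‖ * K₀ * ‖g0 b‖ ≤ ‖f1‖ * K₀ * (‖g0‖ * ‖b‖) :=
      mul_le_mul_of_nonneg_left h3 (by positivity)
    nlinarith [norm_nonneg (g0 b), norm_nonneg c]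

/-- **Homotopy inheritance of the uniform boundary condition.**
If the normed chain complexes `C_*` and `D_*` over a normed ring `R` are chain homotopy
equivalent via degree-wise bounded chain maps `f, g` and degree-wise bounded chain homotopies
`hC` (between `g ∘ f` and `id_C`) and `hD` (between `f ∘ g` and `id_D`), then `C_*` satisfies
the uniform boundary condition in degree `k` if and only if `D_*` does. -/
theorem stmt1 {R : Type*} [NormedRing R] (C D : ℕ → Type*)
    [∀ n, SeminormedAddCommGroup (C n)] [∀ n, SeminormedAddCommGroup (D n)]
    [∀ n, Module R (C n)] [∀ n, Module R (D n)]
    (dC : ∀ n, NormedAddGroupHom (C (n + 1)) (C n))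
    (dD : ∀ n, NormedAddGroupHom (D (n + 1)) (D n))
    (hdC : ∀ n x, dC n (dC (n + 1) x) = 0) (hdD : ∀ n x, dD n (dD (n + 1) x) = 0)
    (hdClin : ∀ n (r : R) x, dC n (r • x) = r • dC n x)
    (hdDlin : ∀ n (r : R) x, dD n (r • x) = r • dD n x)
    (f : ∀ n, NormedAddGroupHom (C n) (D n)) (g : ∀ n, NormedAddGroupHom (D n) (C n))
    (hflin : ∀ n (r : R) x, f n (r • x) = r • f n x)
    (hglin : ∀ n (r : R) x, g n (r • x) = r • g n x)
    (hf : ∀ n x, f n (dC n x) = dD n (f (n + 1) x))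
    (hg : ∀ n x, g n (dD n x) = dC n (g (n + 1) x))
    (hC : ∀ n, NormedAddGroupHom (C n) (C (n + 1)))
    (hD : ∀ n, NormedAddGroupHom (D n) (D (n + 1)))
    (hhC : ∀ n (x : C (n + 1)),
      g (n + 1) (f (n + 1) x) - x = dC (n + 1) (hC (n + 1) x) + hC n (dC n x))
    (hhC0 : ∀ x : C 0, g 0 (f 0 x) - x = dC 0 (hC 0 x))
    (hhD : ∀ n (x : D (n + 1)),
      f (n + 1) (g (n + 1) x) - x = dD (n + 1) (hD (n + 1) x) + hD n (dD n x))
    (hhD0 : ∀ x : D 0, f 0 (g 0 x) - x = dD 0 (hD 0 x))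
    (k : ℕ) :
    (∃ K > 0, IsUBCConstant K (dC k)) ↔ (∃ K > 0, IsUBCConstant K (dD k)) := by
  constructor
  · rintro ⟨K, -, hK⟩
    refine ubc_transfer (dC k) (dD k) (f (k + 1)) (f k) (g k) (g (k + 1)) (hD k)
      (hf k) (hg k) ?_ K hK
    rintro b ⟨y, hy⟩
    match k, b, y, hy with
    | 0, b, y, hy =>
      have := hhD0 b
      linear_combination (norm := abel) this
    | (n + 1), b, y, hy =>
      have h1 := hhD n b
      have h2 : dD n b = 0 := by rw [← hy]; exact hdD n y
      rw [h2, map_zero, add_zero] at h1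
      linear_combination (norm := abel) h1
  · rintro ⟨K, -, hK⟩
    refine ubc_transfer (dD k) (dC k) (g (k + 1)) (g k) (f k) (f (k + 1)) (hC k)
      (hg k) (hf k) ?_ K hK
    rintro b ⟨y, hy⟩
    match k, b, y, hy with
    | 0, b, y, hy =>
      have := hhC0 b
      linear_combination (norm := abel) this
    | (n + 1), b, y, hy =>
      have h1 := hhC n b
      have h2 : dC n b = 0 := by rw [← hy]; exact hdC n y
      rw [h2, map_zero, add_zero] at h1
      linear_combination (norm := abel) h1
end

section
/- Let $C_*$ be a Banach chain complex over $\mathbb{R}$ and let $k \in \mathbb{N}$. Then $C_*$ satisfies the uniform boundary condition in degree $k$ if and only if the image of the boundary operator $\partial_{k+1} \colon C_{k+1} \to C_k$ is a closed subspace of $C_k$. -/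
/-!
Controlled preimages pass to limits: a point of the closure of the range is the sum of a fast
converging series of points of the range, and the preimages of these sum up in the complete
domain (`controlled_closure_of_complete`). Conversely, a closed range is itself a Banach space,
and the open mapping theorem for the corestriction onto it yields controlled preimages.
-/

open Set

theorem NormedAddGroupHom.isClosed_range_of_surjectiveOnWith {G H : Type*}
    [NormedAddCommGroup G] [CompleteSpace G] [NormedAddCommGroup H]
    {f : NormedAddGroupHom G H} {C : ℝ} (hC : 0 < C) (hf : f.SurjectiveOnWith f.range C) :
    IsClosed (f.range : Set H) := by
  refine isClosed_of_closure_subset fun y hy => ?_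
  obtain ⟨x, rfl, -⟩ := controlled_closure_of_complete hC one_pos hf y hy
  exact f.mem_range_self x

namespace ContinuousLinearMap

variable {𝕜 E F : Type*} [NontriviallyNormedField 𝕜]
  [NormedAddCommGroup E] [NormedSpace 𝕜 E] [NormedAddCommGroup F] [NormedSpace 𝕜 F]

theorem isClosed_range_of_exists_preimage_norm_le [CompleteSpace E] (f : E →L[𝕜] F) {K : ℝ}
    (hK : 0 < K) (hf : ∀ y ∈ range f, ∃ x, f x = y ∧ ‖x‖ ≤ K * ‖y‖) : IsClosed (range f) :=
  NormedAddGroupHom.isClosed_range_of_surjectiveOnWith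
    (f := (f : E →+ F).mkNormedAddGroupHom ‖f‖ f.le_opNorm) hK hf

theorem exists_preimage_norm_le_of_isClosed_range [CompleteSpace E] [CompleteSpace F]
    (f : E →L[𝕜] F) (hf : IsClosed (range f)) :
    ∃ K > 0, ∀ y ∈ range f, ∃ x, f x = y ∧ ‖x‖ ≤ K * ‖y‖ := by
  have : IsClosed ((f : E →ₗ[𝕜] F).range : Set F) := hf
  have : CompleteSpace (f : E →ₗ[𝕜] F).range := IsClosed.completeSpace_coe
  obtain ⟨K, hK, hpreimage⟩ :=
    f.rangeRestrict.exists_preimage_norm_le (LinearMap.surjective_rangeRestrict (f : E →ₗ[𝕜] F))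
  refine ⟨K, hK, ?_⟩
  rintro _ ⟨x, rfl⟩
  obtain ⟨x', hx', hnorm⟩ := hpreimage ⟨f x, x, rfl⟩
  exact ⟨x', congrArg Subtype.val hx', hnorm⟩

theorem exists_preimage_norm_le_iff_isClosed_range [CompleteSpace E] [CompleteSpace F]
    (f : E →L[𝕜] F) :
    (∃ K > 0, ∀ y ∈ range f, ∃ x, f x = y ∧ ‖x‖ ≤ K * ‖y‖) ↔ IsClosed (range f) :=
  ⟨fun ⟨_, hK, hf⟩ => f.isClosed_range_of_exists_preimage_norm_le hK hf,
    f.exists_preimage_norm_le_of_isClosed_range⟩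

end ContinuousLinearMap

theorem stmt2_general (C : ℕ → Type*) [∀ n, NormedAddCommGroup (C n)] [∀ n, NormedSpace ℝ (C n)]
    [∀ n, CompleteSpace (C n)]
    (d : ∀ n, C (n + 1) →L[ℝ] C n)
    (k : ℕ) :
    (∃ K > 0, ∀ b ∈ Set.range (d k), ∃ c, d k c = b ∧ ‖c‖ ≤ K * ‖b‖) ↔
      IsClosed (Set.range (d k)) :=
  (d k).exists_preimage_norm_le_iff_isClosed_range

/-- **Matsumoto–Morita: UBC and closed boundaries (Banach case).**
Let `C_*` be a Banach chain complex over `ℝ` (a chain complex of real Banach spaces with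
bounded boundary operators) and `k ∈ ℕ`. Then `C_*` satisfies the uniform boundary condition
in degree `k` (there is `K > 0` such that every `b ∈ im ∂_{k+1}` admits `c ∈ C_{k+1}` with
`∂_{k+1} c = b` and `‖c‖ ≤ K * ‖b‖`) if and only if the image of
`∂_{k+1} : C_{k+1} → C_k` is a closed subspace of `C_k`. -/
theorem stmt2 (C : ℕ → Type*) [∀ n, NormedAddCommGroup (C n)] [∀ n, NormedSpace ℝ (C n)]
    [∀ n, CompleteSpace (C n)]
    (d : ∀ n, C (n + 1) →L[ℝ] C n)
    (hdd : ∀ n x, d n (d (n + 1) x) = 0) (k : ℕ) :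
    (∃ K > 0, ∀ b ∈ Set.range (d k), ∃ c, d k c = b ∧ ‖c‖ ≤ K * ‖b‖) ↔
      IsClosed (Set.range (d k)) :=
  stmt2_general C d k
end

section
/- Let $C_*$ be a normed chain complex over $\mathbb{R}$ and $k \in \mathbb{N}$. If $C_*$ satisfies the uniform boundary condition in degree $k$, then the comparison map $H^{k+1}(B(C_*,\mathbb{R})) \to H^{k+1}(\mathrm{Hom}_{\mathbb{R}}(C_*,\mathbb{R}))$ induced by the inclusion of the bounded dual complex into the algebraic dual complex is injective. -/
/-- **UBC implies injectivity of the comparison map in the dual cohomology.**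
Let `C_*` be a normed chain complex over `ℝ` (with `d n = ∂_{n+1} : C_{n+1} → C_n`) and
`k ∈ ℕ`.  If `C_*` satisfies the uniform boundary condition in degree `k`, then the
comparison map `H^{k+1}(B(C_*, ℝ)) → H^{k+1}(Hom_ℝ(C_*, ℝ))` induced by the inclusion of the
bounded dual complex into the algebraic dual complex is injective.  Concretely: every bounded
`(k+1)`-cocycle (`φ ∘ ∂_{k+2} = 0`) that is an algebraic coboundary (`φ = ψ ∘ ∂_{k+1}` for a
linear functional `ψ`) is already a bounded coboundary (`φ = ψ' ∘ ∂_{k+1}` for a bounded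
linear functional `ψ'`); this is exactly injectivity of the induced map on cohomology. -/
theorem stmt8 (C : ℕ → Type*) [∀ n, NormedAddCommGroup (C n)] [∀ n, NormedSpace ℝ (C n)]
    (d : ∀ n, C (n + 1) →L[ℝ] C n)
    (hdd : ∀ n x, d n (d (n + 1) x) = 0) (k : ℕ) (K : ℝ) (hK : 0 < K)
    (hUBC : ∀ b ∈ Set.range (d k), ∃ c, d k c = b ∧ ‖c‖ ≤ K * ‖b‖) :
    ∀ φ : C (k + 1) →L[ℝ] ℝ, (∀ x, φ (d (k + 1) x) = 0) →
      (∃ ψ : C k →ₗ[ℝ] ℝ, ∀ x, φ x = ψ (d k x)) →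
      ∃ ψ' : C k →L[ℝ] ℝ, ∀ x, φ x = ψ' (d k x) := by
  intro φ hφ ⟨ψ, hψ⟩
  set p := LinearMap.range ((d k) : C (k+1) →ₗ[ℝ] C k) with hp
  have hbound : ∀ x : p, ‖ψ x.1‖ ≤ (‖φ‖ * K) * ‖x‖ := by
    intro x
    obtain ⟨c, hc, hnc⟩ := hUBC x.1 (by
      obtain ⟨y, hy⟩ := x.2
      exact ⟨y, hy⟩)
    have : ψ x.1 = φ c := by rw [← hc]; exact (hψ c).symm
    rw [this]
    calc ‖φ c‖ ≤ ‖φ‖ * ‖c‖ := φ.le_opNorm c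
      _ ≤ ‖φ‖ * (K * ‖x.1‖) := by
          exact mul_le_mul_of_nonneg_left hnc (norm_nonneg φ)
      _ = (‖φ‖ * K) * ‖x‖ := by rw [mul_assoc]; rfl
  let f : p →L[ℝ] ℝ := LinearMap.mkContinuous (ψ.comp p.subtype) (‖φ‖ * K) hbound
  obtain ⟨g, hg, -⟩ := exists_extension_norm_eq p f
  refine ⟨g, fun x => ?_⟩
  have hm : d k x ∈ p := ⟨x, rfl⟩
  have := hg ⟨d k x, hm⟩
  rw [hψ x]
  exact this.symm
end

section
/- Let $H$ be a subgroup of a group $G$, let $J$ be a nonempty set with chosen basepoint $0 \in J$, and consider the cochain complexes $\ell^\infty(H^{*+1},\mathbb{R})^H$ and $\ell^\infty((J\times H)^{*+1},\mathbb{R})^H$ with simplicial coboundary operators, where $H$ acts on $J \times H$ by translation on the second factor. Then the maps $\varphi^*(f)((i_0,h_0),\dots,(i_k,h_k)) = f(h_0,\dots,h_k)$ and $\psi^*(f)(h_0,\dots,h_k) = f((0,h_0),\dots,(0,h_k))$ are mutually homotopy inverse cochain maps of norm $1$ in each degree; moreover $\psi^* \circ \varphi^* = \mathrm{id}$, and there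 is an explicit cochain homotopy between $\varphi^* \circ \psi^*$ and the identity whose norm in degree $k$ is at most $k$. -/
open scoped BigOperators

/-- Simplicial coboundary on homogeneous cochains on a set `S`. -/
noncomputable def scob {S : Type*} (k : ℕ) (f : (Fin (k + 1) → S) → ℝ) :
    (Fin (k + 2) → S) → ℝ :=
  fun x => ∑ j : Fin (k + 2), (-1 : ℝ) ^ (j : ℕ) * f (x ∘ j.succAbove)

/-- Boundedness of a real-valued function. -/
def Bdd {X : Type*} (f : X → ℝ) : Prop := ∃ C, ∀ x, |f x| ≤ C

/-- Supremum (semi)norm of a real-valued function. -/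
noncomputable def supNorm {X : Type*} (f : X → ℝ) : ℝ := ⨆ x, |f x|

/-- `H`-invariance of a cochain on `H`-tuples (diagonal left translation). -/
def InvH (H : Type*) [Group H] {k : ℕ} (f : (Fin (k + 1) → H) → ℝ) : Prop :=
  ∀ (h : H) x, f (fun i => h * x i) = f x

/-- `H`-invariance of a cochain on `(J × H)`-tuples, where `H` acts by translation on the
second factor. -/
def InvJH (J H : Type*) [Group H] {k : ℕ} (f : (Fin (k + 1) → J × H) → ℝ) : Prop :=
  ∀ (h : H) x, f (fun i => ((x i).1, h * (x i).2)) = f x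

/-- The cochain map `φ^* : ℓ^∞(H^{*+1}) → ℓ^∞((J × H)^{*+1})`,
`φ^*(f)((i_0,h_0),…,(i_k,h_k)) = f(h_0,…,h_k)`. -/
def phiMap (J H : Type*) (k : ℕ) (f : (Fin (k + 1) → H) → ℝ) :
    (Fin (k + 1) → J × H) → ℝ :=
  fun x => f fun m => (x m).2

/-- The cochain map `ψ^* : ℓ^∞((J × H)^{*+1}) → ℓ^∞(H^{*+1})`,
`ψ^*(f)(h_0,…,h_k) = f((0,h_0),…,(0,h_k))`, for a basepoint `0 = j₀ ∈ J`. -/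
def psiMap {J : Type*} (H : Type*) (j₀ : J) (k : ℕ) (f : (Fin (k + 1) → J × H) → ℝ) :
    (Fin (k + 1) → H) → ℝ :=
  fun x => f fun m => (j₀, x m)

/-- The explicit cochain homotopy (in the indexing below, `hty k` lowers functions on
`(k+2)`-tuples to functions on `(k+1)`-tuples):
`(hty f)((i_0,h_0),…,(i_k,h_k)) =
  ∑_{j=0}^{k} (-1)^j f((i_0,h_0),…,(i_j,h_j),(0,h_j),…,(0,h_k))`. -/
noncomputable def hty {J H : Type*} (j₀ : J) (k : ℕ)
    (f : (Fin (k + 2) → J × H) → ℝ) : (Fin (k + 1) → J × H) → ℝ :=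
  fun x => ∑ j : Fin (k + 1), (-1 : ℝ) ^ (j : ℕ) *
    f (fun m : Fin (k + 2) =>
      if h : (m : ℕ) ≤ (j : ℕ) then x ⟨m, by have := j.isLt; omega⟩
      else (j₀, (x ⟨(m : ℕ) - 1, by have := m.isLt; omega⟩).2))

/-! Every tuple is the restriction of a sequence `s : ℕ → J × H`. With `r (i, h) = (j₀, h)`,
the `j`-th prism of `s` is `(s 0, …, s j, r (s j), r (s (j + 1)), …)`, and `hty` is the
alternating sum of `f` over the prisms. Prisms and faces satisfy the simplicial identities, so
`δ ∘ hty` and `hty ∘ δ` are signed double sums of values of `f` on faces of prisms; these cancel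
in pairs except for the diagonal terms, which telescope to `f (r ∘ s) - f s`. -/

open Finset

section Norms

variable {X Y : Type*} {f : X → ℝ}

theorem Bdd.comp (hf : Bdd f) (g : Y → X) : Bdd (f ∘ g) :=
  let ⟨C, hC⟩ := hf
  ⟨C, fun y => hC (g y)⟩

theorem supNorm_nonneg (f : X → ℝ) : 0 ≤ supNorm f :=
  Real.iSup_nonneg fun _ => abs_nonneg _

theorem Bdd.abs_le_supNorm (hf : Bdd f) (x : X) : |f x| ≤ supNorm f :=
  let ⟨C, hC⟩ := hf
  le_ciSup ⟨C, by rintro _ ⟨y, rfl⟩; exact hC y⟩ x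

theorem Bdd.supNorm_comp_le (hf : Bdd f) (g : Y → X) : supNorm (f ∘ g) ≤ supNorm f :=
  Real.iSup_le (fun y => hf.abs_le_supNorm (g y)) (supNorm_nonneg f)

theorem supNorm_comp_of_surjective {g : Y → X} (hg : g.Surjective) (f : X → ℝ) :
    supNorm (f ∘ g) = supNorm f := by
  simp only [supNorm, iSup]
  exact congrArg sSup (hg.range_comp fun x => |f x|)

end Norms

section CochainMaps

variable {J H : Type*} (j₀ : J) {k : ℕ}

theorem scob_phiMap (f : (Fin (k + 1) → H) → ℝ) :
    scob k (phiMap J H k f) = phiMap J H (k + 1) (scob k f) := rfl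

theorem scob_psiMap (f : (Fin (k + 1) → J × H) → ℝ) :
    scob k (psiMap H j₀ k f) = psiMap H j₀ (k + 1) (scob k f) := rfl

theorem psiMap_phiMap (f : (Fin (k + 1) → H) → ℝ) : psiMap H j₀ k (phiMap J H k f) = f := rfl

theorem InvH.phiMap [Group H] {f : (Fin (k + 1) → H) → ℝ} (hf : InvH H f) :
    InvJH J H (phiMap J H k f) :=
  fun h x => hf h fun m => (x m).2

theorem InvJH.psiMap [Group H] {f : (Fin (k + 1) → J × H) → ℝ} (hf : InvJH J H f) :
    InvH H (psiMap H j₀ k f) :=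
  fun h x => hf h fun m => (j₀, x m)

theorem supNorm_phiMap [Nonempty J] (f : (Fin (k + 1) → H) → ℝ) :
    supNorm (phiMap J H k f) = supNorm f :=
  supNorm_comp_of_surjective (fun x => ⟨fun m => (Classical.arbitrary J, x m), rfl⟩) f

theorem supNorm_hty_le {f : (Fin (k + 2) → J × H) → ℝ} (hf : Bdd f) :
    supNorm (hty j₀ k f) ≤ (k + 1) * supNorm f := by
  refine Real.iSup_le (fun x => ?_) (mul_nonneg (by positivity) (supNorm_nonneg f))
  refine (abs_sum_le_sum_abs _ _).trans ?_
  calc _ ≤ ∑ _j : Fin (k + 1), supNorm f := sum_le_sum fun j _ => by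
          rw [abs_mul, abs_neg_one_pow, one_mul]; exact hf.abs_le_supNorm _
    _ = (k + 1) * supNorm f := by simp

end CochainMaps

def seqFace {α : Type*} (i : ℕ) (s : ℕ → α) : ℕ → α := fun m => if m < i then s m else s (m + 1)

def seqPrism {α : Type*} (r : α → α) (j : ℕ) (s : ℕ → α) : ℕ → α :=
  fun m => if m ≤ j then s m else r (s (m - 1))

section SeqIdentities

variable {α : Type*} (r : α → α) (s : ℕ → α)

theorem seqPrism_seqFace_of_le {i j : ℕ} (hij : i ≤ j) :
    seqPrism r j (seqFace i s) = seqFace i (seqPrism r (j + 1) s) := by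
  funext m
  simp only [seqPrism, seqFace]
  split_ifs <;> first | rfl | omega | (congr 2; omega)

theorem seqPrism_seqFace_of_lt {i j : ℕ} (hji : j < i) :
    seqPrism r j (seqFace i s) = seqFace (i + 1) (seqPrism r j s) := by
  funext m
  simp only [seqPrism, seqFace]
  split_ifs <;> first | rfl | omega | (congr 2; omega)

theorem seqFace_succ_seqPrism (j : ℕ) :
    seqFace (j + 1) (seqPrism r j s) = seqFace (j + 1) (seqPrism r (j + 1) s) := by
  funext m
  simp only [seqPrism, seqFace]
  split_ifs <;> first | rfl | omega

theorem seqFace_zero_seqPrism_zero : seqFace 0 (seqPrism r 0 s) = r ∘ s := by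
  funext m
  simp [seqPrism, seqFace]

theorem seqFace_seqPrism_self_of_lt {n m : ℕ} (hm : m < n) :
    seqFace n (seqPrism r n s) m = s m := by
  simp [seqPrism, seqFace, hm, hm.le]

end SeqIdentities

theorem comp_succAbove_eq_seqFace {α : Type*} {n : ℕ} (s : ℕ → α) (i : Fin (n + 1)) :
    (fun m : Fin (n + 1) => s m) ∘ i.succAbove = fun m : Fin n => seqFace i s m := by
  funext m
  simp only [Function.comp_apply, seqFace, Fin.succAbove, Fin.lt_def, Fin.val_castSucc]
  split_ifs <;> rfl

theorem scob_seq {α : Type*} (k : ℕ) (f : (Fin (k + 1) → α) → ℝ) (s : ℕ → α) :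
    scob k f (fun m => s m) =
      ∑ i ∈ range (k + 2), (-1 : ℝ) ^ i * f (fun m => seqFace i s m) := by
  simp only [scob, comp_succAbove_eq_seqFace]
  exact Fin.sum_univ_eq_sum_range (fun i => (-1 : ℝ) ^ i * f (fun m => seqFace i s m)) _

theorem hty_seq {J H : Type*} (j₀ : J) (k : ℕ) (f : (Fin (k + 2) → J × H) → ℝ)
    (s : ℕ → J × H) :
    hty j₀ k f (fun m => s m) = ∑ j ∈ range (k + 1),
      (-1 : ℝ) ^ j * f (fun m => seqPrism (fun p => (j₀, p.2)) j s m) :=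
  Fin.sum_univ_eq_sum_range
    (fun j => (-1 : ℝ) ^ j * f (fun m => seqPrism (fun p => (j₀, p.2)) j s m)) _

theorem prism_double_sum_eq (g : ℕ → ℕ → ℝ) (hg : ∀ j, g (j + 1) j = g (j + 1) (j + 1))
    (n : ℕ) :
    (∑ i ∈ range (n + 1), ∑ j ∈ range n,
        (-1 : ℝ) ^ (i + j) * if i ≤ j then g i (j + 1) else g (i + 1) j) +
      ∑ j ∈ range (n + 1), ∑ i ∈ range (n + 2), (-1 : ℝ) ^ (i + j) * g i j =
    g 0 0 - g (n + 1) (n + 1) := by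
  induction n with
  | zero => simp [sum_range_succ, hg, sub_eq_add_neg]
  | succ n ih =>
    have hrow : ∑ j ∈ range n, (-1 : ℝ) ^ (n + 1 + j) *
        (if n + 1 ≤ j then g (n + 1) (j + 1) else g (n + 1 + 1) j) =
          -∑ j ∈ range n, (-1 : ℝ) ^ (n + 2 + j) * g (n + 2) j := by
      rw [← sum_neg_distrib]
      refine sum_congr rfl fun j hj => ?_
      rw [if_neg (by simp at hj; omega)]
      ring
    have hcol : ∑ i ∈ range n, (-1 : ℝ) ^ (i + n) *
        (if i ≤ n then g i (n + 1) else g (i + 1) n) =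
          -∑ i ∈ range n, (-1 : ℝ) ^ (i + (n + 1)) * g i (n + 1) := by
      rw [← sum_neg_distrib]
      refine sum_congr rfl fun i hi => ?_
      rw [if_pos (by simp at hi; omega)]
      ring
    have hsq : ((-1 : ℝ) ^ n) ^ 2 = 1 := by rw [← pow_mul, mul_comm, pow_mul]; norm_num
    simp only [sum_range_succ, sum_add_distrib] at ih ⊢
    rw [if_pos le_rfl, if_neg (by omega)]
    linear_combination ih + hrow + hcol + (g (n + 1) (n + 1) - g (n + 2) (n + 1)) * hsq -
      hg (n + 1)

theorem Fin.exists_seq_eq {α : Type*} {n : ℕ} (x : Fin (n + 1) → α) :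
    ∃ s : ℕ → α, (fun m : Fin (n + 1) => s m) = x :=
  ⟨fun t => x ⟨min t n, by omega⟩, funext fun m => congrArg x (Fin.ext (by simp; omega))⟩

section Homotopy

variable {J H : Type*} (j₀ : J)

def prismFaceEval {n : ℕ} (f : (Fin n → J × H) → ℝ) (s : ℕ → J × H) (i j : ℕ) : ℝ :=
  f fun m => seqFace i (seqPrism (fun p => (j₀, p.2)) j s) m

theorem prismFaceEval_succ_self {n : ℕ} (f : (Fin n → J × H) → ℝ) (s : ℕ → J × H) (j : ℕ) :
    prismFaceEval j₀ f s (j + 1) j = prismFaceEval j₀ f s (j + 1) (j + 1) := by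
  rw [prismFaceEval, seqFace_succ_seqPrism, prismFaceEval]

theorem scob_hty_seq (n : ℕ) (f : (Fin (n + 2) → J × H) → ℝ) (s : ℕ → J × H) :
    scob n (hty j₀ n f) (fun m => s m) =
      ∑ i ∈ range (n + 2), ∑ j ∈ range (n + 1), (-1 : ℝ) ^ (i + j) *
        if i ≤ j then prismFaceEval j₀ f s i (j + 1) else prismFaceEval j₀ f s (i + 1) j := by
  rw [scob_seq]
  refine sum_congr rfl fun i _ => ?_
  rw [hty_seq, mul_sum]
  refine sum_congr rfl fun j _ => ?_
  split_ifs with hij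
  · rw [seqPrism_seqFace_of_le _ _ hij, pow_add, mul_assoc, prismFaceEval]
  · rw [seqPrism_seqFace_of_lt _ _ (not_le.mp hij), pow_add, mul_assoc, prismFaceEval]

theorem hty_scob_seq (n : ℕ) (f : (Fin (n + 1) → J × H) → ℝ) (s : ℕ → J × H) :
    hty j₀ n (scob n f) (fun m => s m) =
      ∑ j ∈ range (n + 1), ∑ i ∈ range (n + 2), (-1 : ℝ) ^ (i + j) * prismFaceEval j₀ f s i j := by
  rw [hty_seq]
  refine sum_congr rfl fun j _ => ?_
  rw [scob_seq, mul_sum]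
  refine sum_congr rfl fun i _ => ?_
  rw [pow_add, mul_left_comm, mul_assoc, prismFaceEval]

theorem phiMap_psiMap_sub_self_seq (n : ℕ) (f : (Fin (n + 1) → J × H) → ℝ) (s : ℕ → J × H) :
    phiMap J H n (psiMap H j₀ n f) (fun m => s m) - f (fun m => s m) =
      prismFaceEval j₀ f s 0 0 - prismFaceEval j₀ f s (n + 1) (n + 1) := by
  simp only [prismFaceEval, seqFace_zero_seqPrism_zero,
    seqFace_seqPrism_self_of_lt _ _ (Fin.is_lt _)]
  rfl

theorem phiMap_psiMap_sub_self_eq_hty_scob (f : (Fin 1 → J × H) → ℝ) :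
    phiMap J H 0 (psiMap H j₀ 0 f) - f = hty j₀ 0 (scob 0 f) := by
  funext x
  obtain ⟨s, rfl⟩ := Fin.exists_seq_eq x
  rw [Pi.sub_apply, phiMap_psiMap_sub_self_seq, hty_scob_seq,
    ← prism_double_sum_eq _ (prismFaceEval_succ_self j₀ f s) 0]
  simp

theorem phiMap_psiMap_sub_self_eq_scob_hty_add_hty_scob (k : ℕ)
    (f : (Fin (k + 2) → J × H) → ℝ) :
    phiMap J H (k + 1) (psiMap H j₀ (k + 1) f) - f =
      scob k (hty j₀ k f) + hty j₀ (k + 1) (scob (k + 1) f) := by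
  funext x
  obtain ⟨s, rfl⟩ := Fin.exists_seq_eq x
  rw [Pi.sub_apply, Pi.add_apply, phiMap_psiMap_sub_self_seq, scob_hty_seq, hty_scob_seq]
  exact (prism_double_sum_eq _ (prismFaceEval_succ_self j₀ f s) (k + 1)).symm

end Homotopy

/-- **The explicit homotopy equivalence in the boundedly controlled Shapiro lemma.**
Let `H ≤ G` be groups, `J` a nonempty set with basepoint `j₀` (so that `G ≅ J × H` as an
`H`-set).  The maps `φ^*` and `ψ^*` between `ℓ^∞(H^{*+1},ℝ)^H` and `ℓ^∞((J×H)^{*+1},ℝ)^H` are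
mutually homotopy inverse cochain maps of norm `1` in each degree; moreover
`ψ^* ∘ φ^* = id`, and the explicit cochain homotopy `hty` between `φ^* ∘ ψ^*` and the
identity has norm at most `k` in degree `k`. -/
theorem stmt9 (G : Type*) [Group G] (H : Subgroup G) (J : Type*) (j₀ : J) :
    -- φ^* and ψ^* are cochain maps
    (∀ (k : ℕ) (f : (Fin (k + 1) → ↥H) → ℝ),
        scob k (phiMap J ↥H k f) = phiMap J ↥H (k + 1) (scob k f)) ∧
    (∀ (k : ℕ) (f : (Fin (k + 1) → J × ↥H) → ℝ),
        scob k (psiMap ↥H j₀ k f) = psiMap ↥H j₀ (k + 1) (scob k f)) ∧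
    -- they preserve invariance and boundedness
    (∀ (k : ℕ) (f : (Fin (k + 1) → ↥H) → ℝ), InvH ↥H f → InvJH J ↥H (phiMap J ↥H k f)) ∧
    (∀ (k : ℕ) (f : (Fin (k + 1) → J × ↥H) → ℝ), InvJH J ↥H f → InvH ↥H (psiMap ↥H j₀ k f)) ∧
    (∀ (k : ℕ) (f : (Fin (k + 1) → ↥H) → ℝ), Bdd f → Bdd (phiMap J ↥H k f)) ∧
    (∀ (k : ℕ) (f : (Fin (k + 1) → J × ↥H) → ℝ), Bdd f → Bdd (psiMap ↥H j₀ k f)) ∧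
    -- both have norm 1 in each degree (φ^* is even isometric, ψ^* is norm-nonincreasing)
    (∀ (k : ℕ) (f : (Fin (k + 1) → ↥H) → ℝ), Bdd f → supNorm (phiMap J ↥H k f) = supNorm f) ∧
    (∀ (k : ℕ) (f : (Fin (k + 1) → J × ↥H) → ℝ), Bdd f →
        supNorm (psiMap ↥H j₀ k f) ≤ supNorm f) ∧
    -- ψ^* ∘ φ^* = id
    (∀ (k : ℕ) (f : (Fin (k + 1) → ↥H) → ℝ), psiMap ↥H j₀ k (phiMap J ↥H k f) = f) ∧
    -- hty is a cochain homotopy between φ^* ∘ ψ^* and the identity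
    (∀ (f : (Fin 1 → J × ↥H) → ℝ),
        phiMap J ↥H 0 (psiMap ↥H j₀ 0 f) - f = hty j₀ 0 (scob 0 f)) ∧
    (∀ (k : ℕ) (f : (Fin (k + 2) → J × ↥H) → ℝ),
        phiMap J ↥H (k + 1) (psiMap ↥H j₀ (k + 1) f) - f =
          scob k (hty j₀ k f) + hty j₀ (k + 1) (scob (k + 1) f)) ∧
    -- the homotopy has norm ≤ k in degree k (here: `hty j₀ k` acts on degree `k+1`)
    (∀ (k : ℕ) (f : (Fin (k + 2) → J × ↥H) → ℝ), Bdd f →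
        supNorm (hty j₀ k f) ≤ (k + 1) * supNorm f) := by
  have : Nonempty J := ⟨j₀⟩
  exact ⟨fun _ => scob_phiMap, fun _ => scob_psiMap j₀, fun _ _ => InvH.phiMap,
    fun _ _ => InvJH.psiMap j₀, fun _ _ hf => hf.comp _, fun _ _ hf => hf.comp _,
    fun _ f _ => supNorm_phiMap f, fun _ _ hf => hf.supNorm_comp_le _, fun _ => psiMap_phiMap j₀,
    phiMap_psiMap_sub_self_eq_hty_scob j₀, phiMap_psiMap_sub_self_eq_scob_hty_add_hty_scob j₀,
    fun _ _ => supNorm_hty_le j₀⟩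
end
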